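/- Let J ⊂ ℂ[x,y,z] be the ideal generated by x⁴, y⁴, z⁴, (x−y)⁴, (x+y)⁴, (x−z)⁴, (x+z)⁴, (y−z)⁴, (y+z)⁴. Then every homogeneous polynomial of degree 5 in ℂ[x,y,z] belongs to J; i.e. the graded piece (ℂ[x,y,z]/J)₅ is zero (and hence all graded pieces of degree ≥ 5 vanish, so J is artinian with socle degree 4). -/
import Mathlib


open MvPolynomial

/-- The ideal generated by the fourth powers of the nine linear forms of the
B₃ line arrangement. -/
noncomputable def B3powersIdeal : Ideal (MvPolynomial (Fin 3) ℂ) :=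
  Ideal.span
    {X 0 ^ 4, X 1 ^ 4, X 2 ^ 4,
     (X 0 - X 1) ^ 4, (X 0 + X 1) ^ 4,
     (X 0 - X 2) ^ 4, (X 0 + X 2) ^ 4,
     (X 1 - X 2) ^ 4, (X 1 + X 2) ^ 4}

namespace B3aux

abbrev MvP := MvPolynomial (Fin 3) ℂ

lemma gen_mem (p : MvP) (hp : p ∈ ({X 0 ^ 4, X 1 ^ 4, X 2 ^ 4,
     (X 0 - X 1) ^ 4, (X 0 + X 1) ^ 4,
     (X 0 - X 2) ^ 4, (X 0 + X 2) ^ 4,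
     (X 1 - X 2) ^ 4, (X 1 + X 2) ^ 4} : Set MvP)) : p ∈ B3powersIdeal :=
  Ideal.subset_span hp

lemma g0 : (X 0 ^ 4 : MvP) ∈ B3powersIdeal := gen_mem _ (Set.mem_insert _ _)
lemma g1 : (X 1 ^ 4 : MvP) ∈ B3powersIdeal :=
  gen_mem _ (Set.mem_insert_of_mem _ (Set.mem_insert _ _))
lemma g2 : (X 2 ^ 4 : MvP) ∈ B3powersIdeal :=
  gen_mem _ (Set.mem_insert_of_mem _ (Set.mem_insert_of_mem _ (Set.mem_insert _ _)))
lemma g01m : ((X 0 - X 1) ^ 4 : MvP) ∈ B3powersIdeal :=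
  gen_mem _ (Set.mem_insert_of_mem _ (Set.mem_insert_of_mem _ (Set.mem_insert_of_mem _
    (Set.mem_insert _ _))))
lemma g01p : ((X 0 + X 1) ^ 4 : MvP) ∈ B3powersIdeal :=
  gen_mem _ (Set.mem_insert_of_mem _ (Set.mem_insert_of_mem _ (Set.mem_insert_of_mem _
    (Set.mem_insert_of_mem _ (Set.mem_insert _ _)))))
lemma g02m : ((X 0 - X 2) ^ 4 : MvP) ∈ B3powersIdeal :=
  gen_mem _ (Set.mem_insert_of_mem _ (Set.mem_insert_of_mem _ (Set.mem_insert_of_mem _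
    (Set.mem_insert_of_mem _ (Set.mem_insert_of_mem _ (Set.mem_insert _ _))))))
lemma g02p : ((X 0 + X 2) ^ 4 : MvP) ∈ B3powersIdeal :=
  gen_mem _ (Set.mem_insert_of_mem _ (Set.mem_insert_of_mem _ (Set.mem_insert_of_mem _
    (Set.mem_insert_of_mem _ (Set.mem_insert_of_mem _ (Set.mem_insert_of_mem _
    (Set.mem_insert _ _)))))))
lemma g12m : ((X 1 - X 2) ^ 4 : MvP) ∈ B3powersIdeal :=
  gen_mem _ (Set.mem_insert_of_mem _ (Set.mem_insert_of_mem _ (Set.mem_insert_of_mem _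
    (Set.mem_insert_of_mem _ (Set.mem_insert_of_mem _ (Set.mem_insert_of_mem _
    (Set.mem_insert_of_mem _ (Set.mem_insert _ _))))))))
lemma g12p : ((X 1 + X 2) ^ 4 : MvP) ∈ B3powersIdeal :=
  gen_mem _ (Set.mem_insert_of_mem _ (Set.mem_insert_of_mem _ (Set.mem_insert_of_mem _
    (Set.mem_insert_of_mem _ (Set.mem_insert_of_mem _ (Set.mem_insert_of_mem _
    (Set.mem_insert_of_mem _ (Set.mem_insert_of_mem _ rfl))))))))

lemma mem_of_eq {p q : MvP} (h : q ∈ B3powersIdeal) (e : p = q) : p ∈ B3powersIdeal := e ▸ h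

-- x²y² type members
lemma sqsq (i j : Fin 3) (hp : ((X i + X j) ^ 4 : MvP) ∈ B3powersIdeal)
    (hm : ((X i - X j) ^ 4 : MvP) ∈ B3powersIdeal)
    (hi : ((X i) ^ 4 : MvP) ∈ B3powersIdeal) (hj : ((X j) ^ 4 : MvP) ∈ B3powersIdeal) :
    (X i ^ 2 * X j ^ 2 : MvP) ∈ B3powersIdeal := by
  have h12 : (C (12⁻¹ : ℂ) * ((X i + X j) ^ 4 + (X i - X j) ^ 4
      - 2 * X i ^ 4 - 2 * X j ^ 4) : MvP) ∈ B3powersIdeal :=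
    Ideal.mul_mem_left _ _ (sub_mem (sub_mem (add_mem hp hm)
      (Ideal.mul_mem_left _ 2 hi)) (Ideal.mul_mem_left _ 2 hj))
  refine mem_of_eq h12 ?_
  have h1 : (C (12⁻¹ : ℂ) * 12 : MvP) = 1 := by
    rw [← map_ofNat (C : ℂ →+* MvP) 12, ← C_mul]
    norm_num
  calc (X i ^ 2 * X j ^ 2 : MvP) = (C (12⁻¹ : ℂ) * 12) * (X i ^ 2 * X j ^ 2) := by
        rw [h1, one_mul]
    _ = C (12⁻¹ : ℂ) * ((X i + X j) ^ 4 + (X i - X j) ^ 4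
        - 2 * X i ^ 4 - 2 * X j ^ 4) := by ring

lemma sq01 : (X 0 ^ 2 * X 1 ^ 2 : MvP) ∈ B3powersIdeal := sqsq 0 1 g01p g01m g0 g1
lemma sq02 : (X 0 ^ 2 * X 2 ^ 2 : MvP) ∈ B3powersIdeal := sqsq 0 2 g02p g02m g0 g2
lemma sq12 : (X 1 ^ 2 * X 2 ^ 2 : MvP) ∈ B3powersIdeal := sqsq 1 2 g12p g12m g1 g2

-- x³y + xy³ type members
lemma cub (i j : Fin 3) (hp : ((X i + X j) ^ 4 : MvP) ∈ B3powersIdeal)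
    (hm : ((X i - X j) ^ 4 : MvP) ∈ B3powersIdeal) :
    (X i ^ 3 * X j + X i * X j ^ 3 : MvP) ∈ B3powersIdeal := by
  have h8 : (C (8⁻¹ : ℂ) * ((X i + X j) ^ 4 - (X i - X j) ^ 4) : MvP) ∈ B3powersIdeal :=
    Ideal.mul_mem_left _ _ (sub_mem hp hm)
  refine mem_of_eq h8 ?_
  have h1 : (C (8⁻¹ : ℂ) * 8 : MvP) = 1 := by
    rw [← map_ofNat (C : ℂ →+* MvP) 8, ← C_mul]
    norm_num
  calc (X i ^ 3 * X j + X i * X j ^ 3 : MvP)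
      = (C (8⁻¹ : ℂ) * 8) * (X i ^ 3 * X j + X i * X j ^ 3) := by rw [h1, one_mul]
    _ = C (8⁻¹ : ℂ) * ((X i + X j) ^ 4 - (X i - X j) ^ 4) := by ring

-- x³yz ∈ J etc.
lemma c011 : (X 0 ^ 3 * X 1 * X 2 : MvP) ∈ B3powersIdeal := by
  have hab : (X 2 * (X 0 ^ 3 * X 1 + X 0 * X 1 ^ 3) : MvP) ∈ B3powersIdeal :=
    Ideal.mul_mem_left _ _ (cub 0 1 g01p g01m)
  have hac : (X 1 * (X 0 ^ 3 * X 2 + X 0 * X 2 ^ 3) : MvP) ∈ B3powersIdeal :=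
    Ideal.mul_mem_left _ _ (cub 0 2 g02p g02m)
  have hbc : (X 0 * (X 1 ^ 3 * X 2 + X 1 * X 2 ^ 3) : MvP) ∈ B3powersIdeal :=
    Ideal.mul_mem_left _ _ (cub 1 2 g12p g12m)
  have h2 : (C (2⁻¹ : ℂ) * (X 2 * (X 0 ^ 3 * X 1 + X 0 * X 1 ^ 3)
      + X 1 * (X 0 ^ 3 * X 2 + X 0 * X 2 ^ 3)
      - X 0 * (X 1 ^ 3 * X 2 + X 1 * X 2 ^ 3)) : MvP) ∈ B3powersIdeal :=
    Ideal.mul_mem_left _ _ (sub_mem (add_mem hab hac) hbc)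
  refine mem_of_eq h2 ?_
  have h1 : (C (2⁻¹ : ℂ) * 2 : MvP) = 1 := by
    rw [← map_ofNat (C : ℂ →+* MvP) 2, ← C_mul]
    norm_num
  calc (X 0 ^ 3 * X 1 * X 2 : MvP)
      = (C (2⁻¹ : ℂ) * 2) * (X 0 ^ 3 * X 1 * X 2) := by rw [h1, one_mul]
    _ = _ := by ring

lemma c101 : (X 0 * X 1 ^ 3 * X 2 : MvP) ∈ B3powersIdeal := by
  have hab : (X 2 * (X 0 ^ 3 * X 1 + X 0 * X 1 ^ 3) : MvP) ∈ B3powersIdeal :=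
    Ideal.mul_mem_left _ _ (cub 0 1 g01p g01m)
  have hac : (X 1 * (X 0 ^ 3 * X 2 + X 0 * X 2 ^ 3) : MvP) ∈ B3powersIdeal :=
    Ideal.mul_mem_left _ _ (cub 0 2 g02p g02m)
  have hbc : (X 0 * (X 1 ^ 3 * X 2 + X 1 * X 2 ^ 3) : MvP) ∈ B3powersIdeal :=
    Ideal.mul_mem_left _ _ (cub 1 2 g12p g12m)
  have h2 : (C (2⁻¹ : ℂ) * (X 2 * (X 0 ^ 3 * X 1 + X 0 * X 1 ^ 3)
      + X 0 * (X 1 ^ 3 * X 2 + X 1 * X 2 ^ 3)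
      - X 1 * (X 0 ^ 3 * X 2 + X 0 * X 2 ^ 3)) : MvP) ∈ B3powersIdeal :=
    Ideal.mul_mem_left _ _ (sub_mem (add_mem hab hbc) hac)
  refine mem_of_eq h2 ?_
  have h1 : (C (2⁻¹ : ℂ) * 2 : MvP) = 1 := by
    rw [← map_ofNat (C : ℂ →+* MvP) 2, ← C_mul]
    norm_num
  calc (X 0 * X 1 ^ 3 * X 2 : MvP)
      = (C (2⁻¹ : ℂ) * 2) * (X 0 * X 1 ^ 3 * X 2) := by rw [h1, one_mul]
    _ = _ := by ring

lemma c110 : (X 0 * X 1 * X 2 ^ 3 : MvP) ∈ B3powersIdeal := by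
  have hab : (X 2 * (X 0 ^ 3 * X 1 + X 0 * X 1 ^ 3) : MvP) ∈ B3powersIdeal :=
    Ideal.mul_mem_left _ _ (cub 0 1 g01p g01m)
  have hac : (X 1 * (X 0 ^ 3 * X 2 + X 0 * X 2 ^ 3) : MvP) ∈ B3powersIdeal :=
    Ideal.mul_mem_left _ _ (cub 0 2 g02p g02m)
  have hbc : (X 0 * (X 1 ^ 3 * X 2 + X 1 * X 2 ^ 3) : MvP) ∈ B3powersIdeal :=
    Ideal.mul_mem_left _ _ (cub 1 2 g12p g12m)
  have h2 : (C (2⁻¹ : ℂ) * (X 1 * (X 0 ^ 3 * X 2 + X 0 * X 2 ^ 3)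
      + X 0 * (X 1 ^ 3 * X 2 + X 1 * X 2 ^ 3)
      - X 2 * (X 0 ^ 3 * X 1 + X 0 * X 1 ^ 3)) : MvP) ∈ B3powersIdeal :=
    Ideal.mul_mem_left _ _ (sub_mem (add_mem hac hbc) hab)
  refine mem_of_eq h2 ?_
  have h1 : (C (2⁻¹ : ℂ) * 2 : MvP) = 1 := by
    rw [← map_ofNat (C : ℂ →+* MvP) 2, ← C_mul]
    norm_num
  calc (X 0 * X 1 * X 2 ^ 3 : MvP)
      = (C (2⁻¹ : ℂ) * 2) * (X 0 * X 1 * X 2 ^ 3) := by rw [h1, one_mul]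
    _ = _ := by ring

lemma mono_mem (a b c : ℕ) (h : 5 ≤ a + b + c) :
    (X 0 ^ a * X 1 ^ b * X 2 ^ c : MvP) ∈ B3powersIdeal := by
  by_cases ha : 4 ≤ a
  · obtain ⟨a', rfl⟩ : ∃ a', a = a' + 4 := ⟨a - 4, by omega⟩
    exact mem_of_eq (Ideal.mul_mem_left _ (X 0 ^ a' * X 1 ^ b * X 2 ^ c) g0) (by ring)
  by_cases hb : 4 ≤ b
  · obtain ⟨b', rfl⟩ : ∃ b', b = b' + 4 := ⟨b - 4, by omega⟩
    exact mem_of_eq (Ideal.mul_mem_left _ (X 0 ^ a * X 1 ^ b' * X 2 ^ c) g1) (by ring)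
  by_cases hc : 4 ≤ c
  · obtain ⟨c', rfl⟩ : ∃ c', c = c' + 4 := ⟨c - 4, by omega⟩
    exact mem_of_eq (Ideal.mul_mem_left _ (X 0 ^ a * X 1 ^ b * X 2 ^ c') g2) (by ring)
  by_cases hab : 2 ≤ a ∧ 2 ≤ b
  · obtain ⟨a', rfl⟩ : ∃ a', a = a' + 2 := ⟨a - 2, by omega⟩
    obtain ⟨b', rfl⟩ : ∃ b', b = b' + 2 := ⟨b - 2, by omega⟩
    exact mem_of_eq (Ideal.mul_mem_left _ (X 0 ^ a' * X 1 ^ b' * X 2 ^ c) sq01) (by ring)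
  by_cases hac : 2 ≤ a ∧ 2 ≤ c
  · obtain ⟨a', rfl⟩ : ∃ a', a = a' + 2 := ⟨a - 2, by omega⟩
    obtain ⟨c', rfl⟩ : ∃ c', c = c' + 2 := ⟨c - 2, by omega⟩
    exact mem_of_eq (Ideal.mul_mem_left _ (X 0 ^ a' * X 1 ^ b * X 2 ^ c') sq02) (by ring)
  by_cases hbc : 2 ≤ b ∧ 2 ≤ c
  · obtain ⟨b', rfl⟩ : ∃ b', b = b' + 2 := ⟨b - 2, by omega⟩
    obtain ⟨c', rfl⟩ : ∃ c', c = c' + 2 := ⟨c - 2, by omega⟩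
    exact mem_of_eq (Ideal.mul_mem_left _ (X 0 ^ a * X 1 ^ b' * X 2 ^ c') sq12) (by ring)
  · -- at most one exponent ≥ 2, all ≤ 3, sum ≥ 5: must be (3,1,1) up to order
    rcases show (a = 3 ∧ b = 1 ∧ c = 1) ∨ (a = 1 ∧ b = 3 ∧ c = 1) ∨ (a = 1 ∧ b = 1 ∧ c = 3)
        from by omega with ⟨rfl, rfl, rfl⟩ | ⟨rfl, rfl, rfl⟩ | ⟨rfl, rfl, rfl⟩
    · exact mem_of_eq c011 (by ring)
    · exact mem_of_eq c101 (by ring)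
    · exact mem_of_eq c110 (by ring)

end B3aux

/-- Every homogeneous polynomial of degree 5 in ℂ[x,y,z] belongs to the ideal J
generated by the nine fourth powers of the B₃ linear forms, i.e. the graded
piece (ℂ[x,y,z]/J)₅ is zero; hence all graded pieces of degree ≥ 5 vanish and
J is artinian with socle degree 4. -/
theorem b3_powers_deg5_vanishes :
    (∀ F : MvPolynomial (Fin 3) ℂ, F.IsHomogeneous 5 → F ∈ B3powersIdeal) ∧
    (∀ (n : ℕ), 5 ≤ n → ∀ F : MvPolynomial (Fin 3) ℂ,
      F.IsHomogeneous n → F ∈ B3powersIdeal) := by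
  have main : ∀ (n : ℕ), 5 ≤ n → ∀ F : MvPolynomial (Fin 3) ℂ,
      F.IsHomogeneous n → F ∈ B3powersIdeal := by
    intro n hn F hF
    rw [← F.support_sum_monomial_coeff]
    refine Ideal.sum_mem _ fun d hd => ?_
    have hcoeff : F.coeff d ≠ 0 := MvPolynomial.mem_support_iff.mp hd
    have hdeg : d 0 + d 1 + d 2 = n := by
      have := hF hcoeff
      rw [Finsupp.weight_apply] at this
      rw [← this, Finsupp.sum_fintype]
      · simp [Fin.sum_univ_three]
      · intro i; simp
    rw [MvPolynomial.monomial_eq]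
    have hprod : (d.prod fun i e => (X i : MvPolynomial (Fin 3) ℂ) ^ e)
        = X 0 ^ d 0 * X 1 ^ d 1 * X 2 ^ d 2 := by
      rw [Finsupp.prod_fintype]
      · rw [Fin.prod_univ_three]
      · intro i; simp
    rw [hprod]
    exact Ideal.mul_mem_left _ _ (B3aux.mono_mem _ _ _ (by omega))
  exact ⟨main 5 le_rfl, main⟩
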